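/- Let K be a field and let R be an infinite-dimensional affine K-algebra without zero divisors. If R is not amenable, then R is paradoxical. -/

import Mathlib

/-!
Fix a finite-dimensional subspace `T ∋ 1` generating `R`. If `R` is not amenable, there are `m`
and `c > 1` with `c · dim V ≤ dim (V T^m)` for every subspace `V`: otherwise subspaces with
`dim (V T^m) < (1 + 1/(m+1)) dim V` are Følner subspaces for `T^m`, they are large because
`w T^m ⊆ V T^m` for any `0 ≠ w ∈ V`, and large Følner subspaces can be stacked into a Følner
exhaustion. Iterating, a power `S` of `T` satisfies `2 dim V ≤ dim (V S)`. For a basis `(pⱼ)` of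
`S` and a basis `(fᵢ)` of `R`, every finite set `F` of pairs `(i, b) ∈ ℕ × Bool` then sees at least
`|F|` dimensions among the `fᵢ pⱼ` with `(i, b) ∈ F`, so Rado's theorem on independent
transversals, extended to infinite families by compactness, picks `c(i, b)` making all
`fᵢ p_{c(i, b)}` independent. Grouping the indices `i` by the pair `(c(i, 0), c(i, 1))` gives the
paradoxical decomposition.
-/

open Filter Module

/-- `W·r`: the image of the finite dimensional subspace `W` under right multiplication
by `r`. -/
noncomputable def rightMulSubmodule (K : Type*) [Field K] {R : Type*} [Ring R] [Algebra K R]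
    (W : Submodule K R) (r : R) : Submodule K R :=
  W.map (LinearMap.mulRight K r)

/-- A Følner exhaustion of a `K`-algebra `R`: an increasing sequence of finite dimensional
subspaces exhausting `R` such that for every `r ∈ R`,
`dim (Wₙ·r + Wₙ) / dim Wₙ → 1`. -/
def FolnerExhaustion (K : Type*) [Field K] (R : Type*) [Ring R] [Algebra K R]
    (W : ℕ → Submodule K R) : Prop :=
  Monotone W ∧ (∀ n, FiniteDimensional K (W n)) ∧ (∀ x : R, ∃ n, x ∈ W n) ∧
    ∀ r : R,
      Tendsto (fun n => (finrank K ↥(rightMulSubmodule K (W n) r ⊔ W n) : ℝ) / finrank K (W n))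
        atTop (nhds 1)

/-- An affine algebra is (left) amenable if it admits a Følner exhaustion. -/
def AmenableAlgebra (K : Type*) [Field K] (R : Type*) [Ring R] [Algebra K R] : Prop :=
  ∃ W : ℕ → Submodule K R, FolnerExhaustion K R W


/-- `R` is paradoxical if every `K`-basis `{fᵢ}` of `R` indexed by `ℕ` can be partitioned into
finitely many pieces `A₁, …, A_m` for which there exist nonzero `g₁, h₁, …, g_m, h_m ∈ R` such
that the combined family of elements `a·gⱼ` and `a·hⱼ` (`a ∈ Aⱼ`) is linearly independent. -/
def ParadoxicalAlgebra (K : Type*) [Field K] (R : Type*) [Ring R] [Algebra K R] : Prop :=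
  ∀ f : Basis ℕ K R, ∃ (m : ℕ) (A : Fin m → Set ℕ) (g h : Fin m → R),
    (∀ i, g i ≠ 0) ∧ (∀ i, h i ≠ 0) ∧
    (⋃ i, A i) = Set.univ ∧
    Pairwise (Function.onFun Disjoint A) ∧
    LinearIndependent K (fun p : (i : Fin m) × (↥(A i) × Bool) =>
      f (p.2.1 : ℕ) * (cond p.2.2 (g p.1) (h p.1)))

open Submodule

section Rado

variable (K : Type*) {V ι κ : Type*} [Field K] [AddCommGroup V] [Module K V]

def RadoCondition (v : ι → κ → V) (B : ι → Finset κ) : Prop :=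
  ∀ s : Finset ι, s.card ≤ finrank K (span K (⋃ i ∈ s, v i '' B i))

theorem finiteDimensional_span_biUnion_image (v : ι → κ → V) (s : Finset ι)
    (B : ι → Finset κ) : FiniteDimensional K (span K (⋃ i ∈ s, v i '' B i)) :=
  FiniteDimensional.span_of_finite K <|
    s.finite_toSet.biUnion fun i _ => (B i).finite_toSet.image (v i)

variable {K} {v : ι → κ → V} {s t : Finset ι} {B B' : ι → Finset κ}

theorem span_biUnion_image_mono (hst : s ⊆ t) (hB : ∀ i ∈ s, B i ⊆ B' i) :
    span K (⋃ i ∈ s, v i '' B i) ≤ span K (⋃ i ∈ t, v i '' B' i) :=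
  span_mono <| Set.iUnion₂_subset fun i hi =>
    (Set.image_mono (Finset.coe_subset.mpr (hB i hi))).trans
      (Set.subset_biUnion_of_mem (u := fun i => v i '' B' i) (hst hi))

theorem finrank_span_biUnion_image_mono (hst : s ⊆ t) (hB : ∀ i ∈ s, B i ⊆ B' i) :
    finrank K (span K (⋃ i ∈ s, v i '' B i)) ≤ finrank K (span K (⋃ i ∈ t, v i '' B' i)) :=
  have := finiteDimensional_span_biUnion_image K v t B'
  finrank_mono (span_biUnion_image_mono hst hB)

theorem span_biUnion_image_union_le_sup [DecidableEq ι] [DecidableEq κ] {i₀ : ι} {x y : κ}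
    (hxy : x ≠ y) (hs : i₀ ∈ s) (ht : i₀ ∈ t) :
    span K (⋃ i ∈ s ∪ t, v i '' B i) ≤
      span K (⋃ i ∈ s, v i '' (Function.update B i₀ ((B i₀).erase x) i : Set κ)) ⊔
        span K (⋃ i ∈ t, v i '' (Function.update B i₀ ((B i₀).erase y) i : Set κ)) := by
  refine (span_mono ?_).trans (span_union _ _).le
  intro _ hz
  simp only [Set.mem_iUnion, Set.mem_image, Finset.mem_coe, Finset.mem_union] at hz
  obtain ⟨i, hi, j, hj, rfl⟩ := hz
  simp only [Set.mem_union, Set.mem_iUnion, Set.mem_image, Finset.mem_coe, Function.update_apply]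
  by_cases hij : i = i₀ ∧ j = x
  · obtain ⟨rfl, rfl⟩ := hij
    exact .inr ⟨i, ht, j, by simp [hj, hxy], rfl⟩
  rcases hi with hi | hi
  · exact .inl ⟨i, hi, j, by split_ifs <;> simp_all, rfl⟩
  by_cases hii : i = i₀
  · exact .inl ⟨i, hii ▸ hs, j, by simp_all, rfl⟩
  · exact .inr ⟨i, hi, j, by simp [hii, hj], rfl⟩

namespace RadoCondition

theorem nonempty (h : RadoCondition K v B) (i : ι) : (B i).Nonempty := by
  rw [Finset.nonempty_iff_ne_empty]
  intro hi
  have := h {i}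
  rw [Finset.set_biUnion_singleton, hi, Finset.coe_empty, Set.image_empty, span_empty,
    finrank_bot, Finset.card_singleton] at this
  exact Nat.not_succ_le_zero 0 this

theorem restrict (h : RadoCondition K v B) (s : Set ι) :
    RadoCondition K (fun i : s => v i) (fun i => B i) := by
  classical
  intro t
  have := h (t.map (Function.Embedding.subtype _))
  rwa [Finset.card_map, Finset.map_eq_image, Finset.set_biUnion_finset_image] at this

theorem linearIndependent_of_eq_singleton [Fintype ι] (h : RadoCondition K v B) {c : ι → κ}
    (hc : ∀ i, B i = {c i}) : LinearIndependent K fun i => v i (c i) := by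
  rw [linearIndependent_iff_card_le_finrank_span]
  have hrange : (⋃ i ∈ Finset.univ, v i '' B i) = Set.range fun i => v i (c i) := by
    ext
    simp [hc, eq_comm]
  have := h Finset.univ
  rwa [hrange, Finset.card_univ] at this

theorem mem_of_finrank_lt [DecidableEq ι] (h : RadoCondition K v B) {i₀ : ι} {b : Finset κ}
    (hs : finrank K (span K (⋃ i ∈ s, v i '' (Function.update B i₀ b i : Set κ))) < s.card) :
    i₀ ∈ s := by
  by_contra hi₀
  refine (h s).not_gt (hs.trans_le' (finrank_span_biUnion_image_mono subset_rfl fun i hi => ?_))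
  rw [Function.update_of_ne (ne_of_mem_of_not_mem hi hi₀)]

/-- If deleting `x` breaks the condition on a set `s₁` and deleting `y` breaks it on `s₂`, then
submodularity of the rank breaks the original condition on `s₁ ∪ s₂` or `(s₁ ∩ s₂).erase i₀`. -/
theorem erase_or_erase [DecidableEq ι] [DecidableEq κ] (h : RadoCondition K v B) {i₀ : ι}
    {x y : κ} (hxy : x ≠ y) :
    RadoCondition K v (Function.update B i₀ ((B i₀).erase x)) ∨
      RadoCondition K v (Function.update B i₀ ((B i₀).erase y)) := by
  by_contra! hcon
  simp only [RadoCondition, not_forall, not_le] at hcon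
  obtain ⟨⟨s₁, hs₁⟩, s₂, hs₂⟩ := hcon
  have hi₁ := h.mem_of_finrank_lt hs₁
  have hi₂ := h.mem_of_finrank_lt hs₂
  set U₁ := span K (⋃ i ∈ s₁, v i '' (Function.update B i₀ ((B i₀).erase x) i : Set κ))
  set U₂ := span K (⋃ i ∈ s₂, v i '' (Function.update B i₀ ((B i₀).erase y) i : Set κ))
  have := finiteDimensional_span_biUnion_image K v s₁ (Function.update B i₀ ((B i₀).erase x))
  have := finiteDimensional_span_biUnion_image K v s₂ (Function.update B i₀ ((B i₀).erase y))
  have hle : span K (⋃ i ∈ (s₁ ∩ s₂).erase i₀, v i '' B i) ≤ U₁ ⊓ U₂ := by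
    refine le_inf (span_biUnion_image_mono ?_ fun i hi => ?_)
      (span_biUnion_image_mono ?_ fun i hi => ?_)
    all_goals first
      | exact (Finset.erase_subset _ _).trans (by simp)
      | rw [Function.update_of_ne (Finset.ne_of_mem_erase hi)]
  have hsup : (s₁ ∪ s₂).card ≤ finrank K ↥(U₁ ⊔ U₂) :=
    (h _).trans (finrank_mono (span_biUnion_image_union_le_sup hxy hi₁ hi₂))
  have hinf : ((s₁ ∩ s₂).erase i₀).card ≤ finrank K ↥(U₁ ⊓ U₂) := (h _).trans (finrank_mono hle)
  have := finrank_sup_add_finrank_inf_eq U₁ U₂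
  have := Finset.card_union_add_card_inter s₁ s₂
  have := Finset.card_erase_of_mem (Finset.mem_inter.mpr ⟨hi₁, hi₂⟩)
  have := Finset.card_pos.mpr ⟨i₀, Finset.mem_inter.mpr ⟨hi₁, hi₂⟩⟩
  omega

theorem exists_mem_linearIndependent [Finite ι] (h : RadoCondition K v B) :
    ∃ c : ι → κ, (∀ i, c i ∈ B i) ∧ LinearIndependent K fun i => v i (c i) := by
  classical
  have := Fintype.ofFinite ι
  induction hN : ∑ i, (B i).card using Nat.strong_induction_on generalizing B with
  | _ N ih =>
  by_cases hone : ∀ i, (B i).card ≤ 1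
  · have hc : ∀ i, ∃ c, B i = {c} := fun i =>
      Finset.card_eq_one.mp (le_antisymm (hone i) (h.nonempty i).card_pos)
    choose c hc using hc
    exact ⟨c, fun i => by simp [hc i], h.linearIndependent_of_eq_singleton hc⟩
  obtain ⟨i₀, hi₀⟩ := not_forall.mp hone
  obtain ⟨x, hx, y, hy, hxy⟩ := Finset.one_lt_card.mp (not_le.mp hi₀)
  have of_erase : ∀ z ∈ B i₀, RadoCondition K v (Function.update B i₀ ((B i₀).erase z)) →
      ∃ c : ι → κ, (∀ i, c i ∈ B i) ∧ LinearIndependent K fun i => v i (c i) := by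
    intro z hz hz'
    have hlt : ∑ i, (Function.update B i₀ ((B i₀).erase z) i).card < N := by
      refine hN ▸ Finset.sum_lt_sum (fun i _ => Finset.card_le_card ?_)
        ⟨i₀, Finset.mem_univ _, by simpa using Finset.card_erase_lt_of_mem hz⟩
      rcases eq_or_ne i i₀ with rfl | hi
      · simpa using Finset.erase_subset _ _
      · rw [Function.update_of_ne hi]
    obtain ⟨c, hcB, hc⟩ := ih _ hlt hz' rfl
    refine ⟨c, fun i => ?_, hc⟩
    rcases eq_or_ne i i₀ with rfl | hi
    · simpa using Finset.mem_of_mem_erase (by simpa using hcB i)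
    · simpa [hi] using hcB i
  rcases h.erase_or_erase (i₀ := i₀) hxy with h' | h'
  exacts [of_erase x hx h', of_erase y hy h']

theorem exists_linearIndependent [Fintype κ] (h : RadoCondition K v fun _ => Finset.univ) :
    ∃ c : ι → κ, LinearIndependent K fun i => v i (c i) := by
  classical
  rcases isEmpty_or_nonempty ι with hι | ⟨⟨i₀⟩⟩
  · exact ⟨isEmptyElim, linearIndependent_empty_type⟩
  have : Nonempty κ := Finset.univ_nonempty_iff.mp (h.nonempty i₀)
  have on_finset : ∀ s : Finset ι, ∃ c : ι → κ, LinearIndepOn K (fun i => v i (c i)) s := by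
    intro s
    obtain ⟨c, -, hc⟩ := (h.restrict s).exists_mem_linearIndependent
    refine ⟨fun i => if hi : i ∈ s then c ⟨i, hi⟩ else Classical.arbitrary κ, ?_⟩
    simpa [LinearIndepOn] using hc
  choose cs hcs using on_finset
  let U := Ultrafilter.of (atTop : Filter (Finset ι))
  have hlim : ∀ i, ∃ j, ∀ᶠ s in (U : Filter (Finset ι)), cs s i = j := fun i => by
    obtain ⟨j, hj⟩ := Ultrafilter.eq_pure_of_finite (U.map fun s => cs s i)
    exact ⟨j, Ultrafilter.mem_map.mp (hj ▸ (Ultrafilter.mem_pure (s := {j})).mpr rfl)⟩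
  choose c hc using hlim
  refine ⟨c, linearIndependent_iff_finset_linearIndependent.mpr fun F => ?_⟩
  have hF : ∀ᶠ s in (U : Filter (Finset ι)), F ⊆ s := Ultrafilter.of_le _ (eventually_ge_atTop F)
  obtain ⟨s, hFs, hcs_eq⟩ := (hF.and ((eventually_all_finset F).mpr fun i _ => hc i)).exists
  exact ((hcs s).mono hFs).congr fun i hi => congrArg (v i) (hcs_eq i hi)

end RadoCondition

end Rado

section Algebra

variable {K R : Type*} [Field K] [Ring R] [Algebra K R]

instance Submodule.finiteDimensional_mul (V W : Submodule K R) [FiniteDimensional K V]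
    [FiniteDimensional K W] : FiniteDimensional K ↥(V * W) :=
  Module.Finite.iff_fg.mpr ((Module.Finite.iff_fg.mp ‹_›).mul (Module.Finite.iff_fg.mp ‹_›))

instance Submodule.finiteDimensional_pow (V : Submodule K R) [FiniteDimensional K V] (n : ℕ) :
    FiniteDimensional K ↥(V ^ n) :=
  Module.Finite.iff_fg.mpr ((Module.Finite.iff_fg.mp ‹_›).pow n)

instance finiteDimensional_rightMulSubmodule (V : Submodule K R) [FiniteDimensional K V] (r : R) :
    FiniteDimensional K ↥(rightMulSubmodule K V r) :=
  Module.Finite.map V _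

variable (K) in
def IsFolner (ε : ℝ) (V : Submodule K R) (r : R) : Prop :=
  (finrank K ↥(rightMulSubmodule K V r ⊔ V) : ℝ) ≤ (1 + ε) * finrank K V

theorem isFolner_of_finrank_mul_le {V S : Submodule K R} [FiniteDimensional K ↥(V * S)]
    (hS : (1 : R) ∈ S) {ε : ℝ} (h : (finrank K ↥(V * S) : ℝ) ≤ (1 + ε) * finrank K V) {r : R}
    (hr : r ∈ S) : IsFolner K ε V r := by
  have hle : rightMulSubmodule K V r ⊔ V ≤ V * S :=
    sup_le (map_le_iff_le_comap.mpr fun x hx => mul_mem_mul hx hr)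
      fun x hx => by simpa using mul_mem_mul hx hS
  exact le_trans (by exact_mod_cast finrank_mono hle) h

theorem IsFolner.sup {k : ℕ} {X Y : Submodule K R} [FiniteDimensional K X]
    [FiniteDimensional K Y] {r : R} (hX : IsFolner K (1 / ((k : ℝ) + 1)) X r)
    (hY : 2 * (k + 1) * finrank K Y ≤ finrank K X) :
    IsFolner K (2 * (1 / ((k : ℝ) + 1))) (X ⊔ Y) r := by
  have hsplit : rightMulSubmodule K (X ⊔ Y) r ⊔ (X ⊔ Y) =
      (rightMulSubmodule K X r ⊔ X) ⊔ (rightMulSubmodule K Y r ⊔ Y) := by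
    rw [rightMulSubmodule, Submodule.map_sup, ← rightMulSubmodule, ← rightMulSubmodule,
      sup_sup_sup_comm]
  have hYr : finrank K ↥(rightMulSubmodule K Y r ⊔ Y) ≤ 2 * finrank K Y := by
    have : finrank K ↥(rightMulSubmodule K Y r) ≤ finrank K Y := finrank_map_le _ _
    have := finrank_add_le_finrank_add_finrank (rightMulSubmodule K Y r) Y
    omega
  have hnum : finrank K ↥(rightMulSubmodule K (X ⊔ Y) r ⊔ (X ⊔ Y)) ≤
      finrank K ↥(rightMulSubmodule K X r ⊔ X) + 2 * finrank K Y :=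
    hsplit ▸ (finrank_add_le_finrank_add_finrank _ _).trans (Nat.add_le_add_left hYr _)
  have hsmall : 2 * (finrank K Y : ℝ) ≤ 1 / ((k : ℝ) + 1) * finrank K X := by
    rw [one_div_mul_eq_div, le_div_iff₀ (by positivity)]
    exact_mod_cast (by linarith : 2 * finrank K Y * (k + 1) ≤ finrank K X)
  have hXY : (finrank K X : ℝ) ≤ finrank K ↥(X ⊔ Y) := by exact_mod_cast finrank_mono le_sup_left
  unfold IsFolner at hX ⊢
  calc (finrank K ↥(rightMulSubmodule K (X ⊔ Y) r ⊔ (X ⊔ Y)) : ℝ)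
      ≤ finrank K ↥(rightMulSubmodule K X r ⊔ X) + 2 * finrank K Y := by exact_mod_cast hnum
    _ ≤ (1 + 2 * (1 / ((k : ℝ) + 1))) * finrank K X := by linarith
    _ ≤ (1 + 2 * (1 / ((k : ℝ) + 1))) * finrank K ↥(X ⊔ Y) := by gcongr

theorem tendsto_folner_ratio {W : ℕ → Submodule K R} {r : R} {ε : ℕ → ℝ}
    (hε : Tendsto ε atTop (nhds 0)) (hpos : ∀ᶠ n in atTop, 0 < finrank K (W n))
    (hW : ∀ᶠ n in atTop, IsFolner K (ε n) (W n) r) :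
    Tendsto (fun n => (finrank K ↥(rightMulSubmodule K (W n) r ⊔ W n) : ℝ) / finrank K (W n))
      atTop (nhds 1) := by
  have hupper : Tendsto (fun n => 1 + ε n) atTop (nhds 1) := by simpa using hε.const_add 1
  refine tendsto_of_tendsto_of_tendsto_of_le_of_le' tendsto_const_nhds hupper ?_ ?_
  · filter_upwards [hpos] with n hn
    have := Module.finite_of_finrank_pos hn
    rw [le_div_iff₀ (by exact_mod_cast hn), one_mul]
    exact_mod_cast finrank_mono le_sup_right
  · filter_upwards [hpos, hW] with n hn hn'
    exact (div_le_iff₀ (by exact_mod_cast hn)).mpr hn'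

theorem amenableAlgebra_of_isFolner (E : ℕ → Submodule K R) (hE : Monotone E)
    [∀ n, FiniteDimensional K ↥(E n)] (hexh : ∀ x, ∃ n, x ∈ E n)
    (h : ∀ n D : ℕ, ∃ V : Submodule K R, FiniteDimensional K V ∧ D ≤ finrank K V ∧
      ∀ r ∈ E n, IsFolner K (1 / ((n : ℝ) + 1)) V r) :
    AmenableAlgebra K R := by
  choose V hVfd hVD hV using h
  -- `D k Y` makes the new Følner piece so large that `Y ⊔ E k` is negligible beside it
  let D : ℕ → Submodule K R → ℕ := fun k Y => 2 * (k + 1) * finrank K ↥(Y ⊔ E k) + 1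
  obtain ⟨W, hW₀, hW⟩ : ∃ W : ℕ → Submodule K R,
      W 0 = ⊥ ∧ ∀ k, W (k + 1) = V k (D k (W k)) ⊔ (W k ⊔ E k) :=
    ⟨fun n => Nat.rec ⊥ (fun k Y => V k (D k Y) ⊔ (Y ⊔ E k)) n, rfl, fun _ => rfl⟩
  have hWfd : ∀ k : ℕ, FiniteDimensional K ↥(W k) := by
    intro k
    induction k with
    | zero => rw [hW₀]; infer_instance
    | succ k ih =>
      have := hVfd k (D k (W k))
      rw [hW]
      infer_instance
  refine ⟨W, monotone_nat_of_le_succ fun k => hW k ▸ le_sup_left.trans le_sup_right, hWfd,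
    fun x => ?_, fun r => ?_⟩
  · obtain ⟨n, hn⟩ := hexh x
    exact ⟨n + 1, (hW n ▸ le_sup_right.trans le_sup_right : E n ≤ W (n + 1)) hn⟩
  obtain ⟨n₀, hn₀⟩ := hexh r
  have hε : Tendsto (fun k : ℕ => 2 * (1 / ((k : ℝ) + 1))) atTop (nhds 0) := by
    simpa using (tendsto_one_div_add_atTop_nhds_zero_nat (𝕜 := ℝ)).const_mul 2
  refine (tendsto_add_atTop_iff_nat 1).mp (tendsto_folner_ratio hε (.of_forall fun k => ?_)
    ((eventually_ge_atTop n₀).mono fun k hk => ?_))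
  · have := hWfd (k + 1)
    exact (Nat.succ_pos _).trans_le ((hVD _ _).trans (finrank_mono (hW k ▸ le_sup_left)))
  · have := hWfd k
    have := hVfd k (D k (W k))
    exact hW k ▸ (hV k _ r (hE hk hn₀)).sup ((Nat.le_succ _).trans (hVD _ _))

theorem finrank_le_finrank_mul [NoZeroDivisors R] {V : Submodule K R} (hV : V ≠ ⊥)
    (S : Submodule K R) [FiniteDimensional K ↥(V * S)] : finrank K S ≤ finrank K ↥(V * S) := by
  obtain ⟨w, hwV, hw₀⟩ := exists_mem_ne_zero_of_ne_bot hV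
  have hinj : Function.Injective (LinearMap.mulLeft K w) := fun _ _ h => mul_left_cancel₀ hw₀ h
  calc finrank K S = finrank K ↥(S.map (LinearMap.mulLeft K w)) :=
        (equivMapOfInjective _ hinj S).finrank_eq
    _ ≤ finrank K ↥(V * S) := finrank_mono (map_le_iff_le_comap.mpr fun _ hx => mul_mem_mul hwV hx)

theorem exists_le_finrank_of_exhausts {M : Type*} [AddCommGroup M] [Module K M]
    {E : ℕ → Submodule K M} (hE : Monotone E) [∀ n, FiniteDimensional K ↥(E n)]
    (hexh : ∀ x, ∃ n, x ∈ E n) (hinf : ¬FiniteDimensional K M) (D : ℕ) :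
    ∃ n, D ≤ finrank K ↥(E n) := by
  have hD : (D : Cardinal) ≤ Module.rank K M :=
    Cardinal.natCast_lt_aleph0.le.trans (not_lt.mp (mt Module.rank_lt_aleph0_iff.mp hinf))
  obtain ⟨u, rfl, hu⟩ := le_rank_iff_exists_linearIndependent_finset.mp hD
  choose n hn using hexh
  classical
  obtain ⟨N, hN⟩ := (u.image n).exists_le
  refine ⟨N, ?_⟩
  rw [← finrank_span_finset_eq_card hu]
  exact finrank_mono (span_le.mpr fun x hx => hE (hN _ (Finset.mem_image_of_mem n hx)) (hn x))

variable (K R) in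
theorem exists_generating_subspace [Algebra.FiniteType K R] :
    ∃ T : Submodule K R, FiniteDimensional K ↥T ∧ (1 : R) ∈ T ∧ ∀ x : R, ∃ n, x ∈ T ^ n := by
  classical
  obtain ⟨s, hs⟩ := Algebra.FiniteType.out (R := K) (A := R)
  set T := span K ((insert 1 s : Finset R) : Set R)
  have hT₁ : (1 : R) ∈ T := subset_span (Finset.mem_insert_self _ _)
  have hmono : Monotone (T ^ ·) := pow_right_monotone (one_le.mpr hT₁)
  refine ⟨T, FiniteDimensional.span_finset K _, hT₁, fun x => ?_⟩
  have hx : x ∈ Algebra.adjoin K (s : Set R) := hs ▸ Algebra.mem_top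
  induction hx using Algebra.adjoin_induction with
  | mem x hx => exact ⟨1, (pow_one T).symm ▸ subset_span (Finset.mem_insert_of_mem hx)⟩
  | algebraMap r => exact ⟨0, (pow_zero T).symm ▸ algebraMap_mem r⟩
  | add x y _ _ hx hy =>
    obtain ⟨a, ha⟩ := hx
    obtain ⟨b, hb⟩ := hy
    exact ⟨max a b, add_mem (hmono (le_max_left a b) ha) (hmono (le_max_right a b) hb)⟩
  | mul x y _ _ hx hy =>
    obtain ⟨a, ha⟩ := hx
    obtain ⟨b, hb⟩ := hy
    exact ⟨a + b, (pow_add T a b).symm ▸ mul_mem_mul ha hb⟩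

theorem exists_expansion_of_not_amenable [NoZeroDivisors R] {T : Submodule K R}
    [FiniteDimensional K ↥T] (hT₁ : (1 : R) ∈ T) (hT : ∀ x : R, ∃ n, x ∈ T ^ n)
    (hinf : ¬FiniteDimensional K R) (hR : ¬AmenableAlgebra K R) :
    ∃ m : ℕ, ∃ c : ℝ, 1 < c ∧ ∀ V : Submodule K R, c * finrank K V ≤ finrank K ↥(V * T ^ m) := by
  have hmono : Monotone (T ^ ·) := pow_right_monotone (one_le.mpr hT₁)
  by_contra! hcon
  refine hR (amenableAlgebra_of_isFolner (T ^ ·) hmono hT fun n D => ?_)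
  obtain ⟨m₁, hm₁⟩ := exists_le_finrank_of_exhausts hmono hT hinf (2 * D)
  set m := max n m₁
  have hm : 1 / ((m : ℝ) + 1) ≤ 1 / ((n : ℝ) + 1) := by gcongr; exact_mod_cast le_max_left n m₁
  obtain ⟨V, hV⟩ := hcon m (1 + 1 / ((m : ℝ) + 1)) (lt_add_of_pos_right 1 (by positivity))
  have hVpos : 0 < finrank K V :=
    Nat.pos_of_ne_zero fun h0 => (Nat.cast_nonneg _).not_gt (by simpa [h0] using hV)
  have := Module.finite_of_finrank_pos hVpos
  have hVne : V ≠ ⊥ := by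
    rintro rfl
    simp at hVpos
  refine ⟨V, this, ?_, fun r hr => ?_⟩
  · have h₁ : (2 * D : ℝ) ≤ finrank K ↥(V * T ^ m) := by
      exact_mod_cast hm₁.trans ((finrank_mono (hmono (le_max_right n m₁))).trans
        (finrank_le_finrank_mul hVne _))
    have : 1 / ((m : ℝ) + 1) ≤ 1 := div_le_one_of_le₀ (by simp) (by positivity)
    exact_mod_cast (by nlinarith : (D : ℝ) ≤ finrank K V)
  · refine isFolner_of_finrank_mul_le (by simpa using Submodule.pow_mem_pow T hT₁ m) ?_
      (hmono (le_max_left n m₁) hr)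
    calc (finrank K ↥(V * T ^ m) : ℝ) ≤ (1 + 1 / ((m : ℝ) + 1)) * finrank K V := hV.le
      _ ≤ (1 + 1 / ((n : ℝ) + 1)) * finrank K V := by gcongr

theorem exists_pow_doubling {S : Submodule K R} {c : ℝ} (hc : 1 < c)
    (h : ∀ V : Submodule K R, c * finrank K V ≤ finrank K ↥(V * S)) :
    ∃ k : ℕ, ∀ V : Submodule K R, 2 * finrank K V ≤ finrank K ↥(V * S ^ k) := by
  have hiter : ∀ (k : ℕ) (V : Submodule K R), c ^ k * finrank K V ≤ finrank K ↥(V * S ^ k) := by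
    intro k
    induction k with
    | zero => intro V; rw [pow_zero, one_mul, pow_zero, mul_one]
    | succ k ih =>
      intro V
      calc c ^ (k + 1) * finrank K V = c * (c ^ k * finrank K V) := by ring
        _ ≤ c * finrank K ↥(V * S ^ k) := by gcongr; exact ih V
        _ ≤ finrank K ↥(V * S ^ k * S) := h _
        _ = finrank K ↥(V * S ^ (k + 1)) := by rw [pow_succ, mul_assoc]
  obtain ⟨k, hk⟩ := pow_unbounded_of_one_lt 2 hc
  refine ⟨k, fun V => ?_⟩
  exact_mod_cast (mul_le_mul_of_nonneg_right hk.le (Nat.cast_nonneg _)).trans (hiter k V)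

open scoped Pointwise in
theorem radoCondition_of_doubling {ι κ : Type*} [Fintype κ] {f : ι → R}
    (hf : LinearIndependent K f) (p : κ → R)
    (h : ∀ V : Submodule K R, 2 * finrank K V ≤ finrank K ↥(V * span K (Set.range p))) :
    RadoCondition K (fun (x : ι × Bool) j => f x.1 * p j) fun _ => Finset.univ := by
  classical
  intro F
  set G := F.image Prod.fst
  set W := span K (Set.range (f ∘ ((↑) : G → ι)))
  have hFG : F.card ≤ 2 * G.card :=
    calc F.card ≤ (G ×ˢ (Finset.univ : Finset Bool)).card :=
          Finset.card_le_card fun x hx => Finset.mem_product.mpr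
            ⟨Finset.mem_image_of_mem _ hx, Finset.mem_univ _⟩
      _ = 2 * G.card := by simp [mul_comm]
  have hW : finrank K W = G.card := by
    rw [finrank_span_eq_card (hf.comp _ Subtype.val_injective), Fintype.card_coe]
  have hsub : Set.range (f ∘ ((↑) : G → ι)) * Set.range p ⊆
      ⋃ x ∈ F, (fun j => f x.1 * p j) '' (Finset.univ : Finset κ) := by
    rintro _ ⟨_, ⟨⟨i, hi⟩, rfl⟩, _, ⟨j, rfl⟩, rfl⟩
    obtain ⟨x, hx, rfl⟩ := Finset.mem_image.mp hi
    exact Set.mem_biUnion hx ⟨j, by simp, rfl⟩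
  have := finiteDimensional_span_biUnion_image K (fun (x : ι × Bool) j => f x.1 * p j) F
    fun _ => Finset.univ
  calc F.card ≤ 2 * finrank K W := hW ▸ hFG
    _ ≤ finrank K ↥(W * span K (Set.range p)) := h W
    _ ≤ _ := finrank_mono ((span_mul_span (R := K) _ _).trans_le (span_mono hsub))

theorem exists_paradoxical_partition {κ : Type*} [Finite κ] (f : ℕ → R) {p : κ → R}
    (hp : ∀ j, p j ≠ 0) {c : ℕ × Bool → κ} (hc : LinearIndependent K fun x => f x.1 * p (c x)) :
    ∃ (m : ℕ) (A : Fin m → Set ℕ) (g h : Fin m → R),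
      (∀ i, g i ≠ 0) ∧ (∀ i, h i ≠ 0) ∧ (⋃ i, A i) = Set.univ ∧
      Pairwise (Function.onFun Disjoint A) ∧
      LinearIndependent K (fun p : (i : Fin m) × (↥(A i) × Bool) =>
        f (p.2.1 : ℕ) * (cond p.2.2 (g p.1) (h p.1))) := by
  have := Fintype.ofFinite κ
  let e := Fintype.equivFin (κ × κ)
  let q : ℕ → Fin (Fintype.card (κ × κ)) := fun i => e (c (i, true), c (i, false))
  refine ⟨_, fun a => q ⁻¹' {a}, fun a => p (e.symm a).1, fun a => p (e.symm a).2,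
    fun a => hp _, fun a => hp _, ?_, fun a b hab => ?_, ?_⟩
  · ext i
    simp
  · exact (Set.disjoint_singleton.mpr hab).preimage q
  let φ : (a : Fin _) × (↥(q ⁻¹' {a}) × Bool) → ℕ × Bool := fun x => (x.2.1, x.2.2)
  have hφ : Function.Injective φ := by
    rintro ⟨a, ⟨i, rfl⟩, b⟩ ⟨a', ⟨i', hi'⟩, b'⟩ hii
    obtain ⟨rfl, rfl⟩ := Prod.mk.inj hii
    obtain rfl : q i = a' := hi'
    rfl
  convert hc.comp φ hφ using 1
  ext ⟨a, ⟨i, hi⟩, b⟩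
  obtain rfl : q i = a := hi
  cases b <;> simp [φ, q]

end Algebra

theorem nonamenable_paradoxical_general (K : Type*) [Field K] (R : Type*) [Ring R] [Algebra K R]
    [Algebra.FiniteType K R] [NoZeroDivisors R]
    (hR : ¬ AmenableAlgebra K R) :
    ParadoxicalAlgebra K R := by
  intro f
  have hinf : ¬FiniteDimensional K R := fun _ => @not_finite ℕ _ (Module.Finite.finite_basis f)
  obtain ⟨T, _, hT₁, hT⟩ := exists_generating_subspace K R
  obtain ⟨m, c, hc, hexp⟩ := exists_expansion_of_not_amenable hT₁ hT hinf hR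
  obtain ⟨k, hdouble⟩ := exists_pow_doubling hc hexp
  let b := Module.finBasis K ↥((T ^ m) ^ k)
  have hb : span K (Set.range fun j => (b j : R)) = (T ^ m) ^ k := by
    rw [show (fun j => (b j : R)) = ((T ^ m) ^ k).subtype ∘ b from rfl, Set.range_comp,
      span_image, b.span_eq, Submodule.map_top, range_subtype]
  obtain ⟨choice, hchoice⟩ :=
    (radoCondition_of_doubling f.linearIndependent _ (hb ▸ hdouble)).exists_linearIndependent
  exact exists_paradoxical_partition f (p := fun j => (b j : R))
    (fun j => by simpa using b.ne_zero j) hchoice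

/-- An infinite dimensional affine algebra without zero divisors which is not amenable is
paradoxical. -/
theorem nonamenable_paradoxical (K : Type*) [Field K] (R : Type*) [Ring R] [Algebra K R]
    [Algebra.FiniteType K R] [NoZeroDivisors R]
    (hinf : ¬ FiniteDimensional K R)
    (hR : ¬ AmenableAlgebra K R) :
    ParadoxicalAlgebra K R :=
  nonamenable_paradoxical_general K R hR
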